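/- Soundness of DmbC with respect to swap Kripke models: for every set of formulas Γ ∪ {φ} ⊆ For(Σ), if Γ ⊢_DmbC φ then Γ ⊨_DmbC φ. -/

import Mathlib

/-- Formulas over the signature Σ = {∧, ∨, →, ¬, ∘, O}, with countably many
propositional variables. -/
inductive Form : Type
  | var : ℕ → Form
  | and : Form → Form → Form
  | or : Form → Form → Form
  | imp : Form → Form → Form
  | neg : Form → Form
  | circ : Form → Form
  | obl : Form → Form

namespace Form
/-- ⊥_α := (α ∧ ¬α) ∧ ∘α -/
def bot (α : Form) : Form := (α.and α.neg).and α.circ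
end Form

/-- Theorems of the Hilbert calculus DmbC: CPL⁺ axioms, (EM), (bc), (O-K), (O-E),
with rules Modus Ponens and O-necessitation. -/
inductive ThmDmbC : Form → Prop
  | A1 (α β : Form) : ThmDmbC (α.imp (β.imp α))
  | A2 (α β γ : Form) : ThmDmbC ((α.imp (β.imp γ)).imp ((α.imp β).imp (α.imp γ)))
  | A3 (α β : Form) : ThmDmbC (α.imp (β.imp (α.and β)))
  | A4 (α β : Form) : ThmDmbC ((α.and β).imp α)
  | A5 (α β : Form) : ThmDmbC ((α.and β).imp β)
  | A6 (α β : Form) : ThmDmbC (α.imp (α.or β))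
  | A7 (α β : Form) : ThmDmbC (β.imp (α.or β))
  | A8 (α β γ : Form) : ThmDmbC ((α.imp γ).imp ((β.imp γ).imp ((α.or β).imp γ)))
  | A9 (α β : Form) : ThmDmbC (((α.imp β).imp α).imp α)
  | EM (α : Form) : ThmDmbC (α.or α.neg)
  | bc (α β : Form) : ThmDmbC (α.circ.imp (α.imp (α.neg.imp β)))
  | OK (α β : Form) : ThmDmbC ((α.imp β).obl.imp (α.obl.imp β.obl))
  | OE (α : Form) : ThmDmbC (α.bot.obl.imp α.bot)
  | mp {α β : Form} : ThmDmbC (α.imp β) → ThmDmbC α → ThmDmbC β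
  | nec {α : Form} : ThmDmbC α → ThmDmbC α.obl

/-- conj γ [γ₂,…,γ_k] = γ ∧ γ₂ ∧ … ∧ γ_k -/
def conj (γ : Form) : List Form → Form
  | [] => γ
  | δ :: l => γ.and (conj δ l)

/-- Γ ⊢_DmbC φ iff ⊢ φ or ⊢ (γ₁ ∧ … ∧ γ_k) → φ for some γ₁,…,γ_k ∈ Γ, k ≥ 1. -/
def DerivDmbC (Γ : Set Form) (φ : Form) : Prop :=
  ThmDmbC φ ∨ ∃ (γ : Form) (l : List Form),
    (∀ δ ∈ γ :: l, δ ∈ Γ) ∧ ThmDmbC ((conj γ l).imp φ)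

/-- The three snapshots T = (1,0), t = (1,1), F = (0,1). -/
inductive SV : Type
  | T | t | F
deriving DecidableEq

/-- First coordinate of a snapshot. -/
def SV.p1 : SV → Bool
  | .T => true | .t => true | .F => false

/-- Second coordinate of a snapshot. -/
def SV.p2 : SV → Bool
  | .T => false | .t => true | .F => true

/-- Designated values: D = {T, t}, i.e. first coordinate is 1. -/
def SV.desig (a : SV) : Prop := a.p1 = true

/-- Swap Kripke model conditions for DmbC on a serial frame (W,R) with
valuations v_w : Form → SV. -/
structure IsModelDmbC {W : Type} (R : W → W → Prop) (v : W → Form → SV) : Prop where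
  serial : ∀ w, ∃ w', R w w'
  and_ : ∀ w α β, (v w (α.and β)).p1 = ((v w α).p1 && (v w β).p1)
  or_ : ∀ w α β, (v w (α.or β)).p1 = ((v w α).p1 || (v w β).p1)
  imp_ : ∀ w α β, (v w (α.imp β)).p1 = (!(v w α).p1 || (v w β).p1)
  neg_ : ∀ w α, (v w α.neg).p1 = (v w α).p2
  circ_ : ∀ w α, (v w α.circ).p1 ≤ !((v w α).p1 && (v w α).p2)
  obl_ : ∀ w α, ((v w α.obl).p1 = true ↔ ∀ w', R w w' → (v w' α).p1 = true)

/-- Γ ⊨_DmbC φ : semantic consequence over all swap Kripke models for DmbC. -/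
def SemDmbC (Γ : Set Form) (φ : Form) : Prop :=
  ∀ (W : Type) (R : W → W → Prop) (v : W → Form → SV), Nonempty W →
    IsModelDmbC R v → ∀ w : W, (∀ γ ∈ Γ, (v w γ).desig) → (v w φ).desig

namespace IsModelDmbC

variable {W : Type} {R : W → W → Prop} {v : W → Form → SV}

theorem desig_and (h : IsModelDmbC R v) (w : W) (α β : Form) :
    (v w (α.and β)).desig ↔ (v w α).desig ∧ (v w β).desig := by
  simp [SV.desig, h.and_]

theorem desig_or (h : IsModelDmbC R v) (w : W) (α β : Form) :
    (v w (α.or β)).desig ↔ (v w α).desig ∨ (v w β).desig := by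
  simp [SV.desig, h.or_]

theorem desig_imp (h : IsModelDmbC R v) (w : W) (α β : Form) :
    (v w (α.imp β)).desig ↔ ((v w α).desig → (v w β).desig) := by
  simp only [SV.desig, h.imp_]
  cases (v w α).p1 <;> simp

theorem desig_neg (h : IsModelDmbC R v) (w : W) (α : Form) :
    (v w α.neg).desig ↔ (v w α).p2 = true :=
  Eq.to_iff (congrArg (· = true) (h.neg_ w α))

theorem not_desig_and_p2_of_desig_circ (h : IsModelDmbC R v) (w : W) (α : Form)
    (hc : (v w α.circ).desig) : ¬((v w α).desig ∧ (v w α).p2 = true) := by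
  have := h.circ_ w α
  rw [SV.desig] at hc
  rw [hc] at this
  rw [SV.desig]
  revert this
  cases (v w α).p1 <;> cases (v w α).p2 <;> decide

theorem desig_obl (h : IsModelDmbC R v) (w : W) (α : Form) :
    (v w α.obl).desig ↔ ∀ w', R w w' → (v w' α).desig :=
  h.obl_ w α

theorem not_desig_bot (h : IsModelDmbC R v) (w : W) (α : Form) : ¬(v w α.bot).desig := by
  simp only [Form.bot, h.desig_and, h.desig_neg]
  exact fun ⟨hα, hc⟩ => h.not_desig_and_p2_of_desig_circ w α hc hα

theorem desig_of_thm (h : IsModelDmbC R v) {φ : Form} (hφ : ThmDmbC φ) (w : W) :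
    (v w φ).desig := by
  induction hφ generalizing w with
  | EM α =>
    rw [h.desig_or, h.desig_neg, SV.desig, ← Bool.or_eq_true]
    cases v w α <;> rfl
  | bc α β =>
    simp only [h.desig_imp, h.desig_neg]
    exact fun hc hα hn => absurd ⟨hα, hn⟩ (h.not_desig_and_p2_of_desig_circ w α hc)
  | OK α β =>
    simp only [h.desig_imp, h.desig_obl]
    exact fun hk ha w' hw' => hk w' hw' (ha w' hw')
  | OE α =>
    -- seriality: a world with no successor would make `O ⊥_α` vacuously true
    obtain ⟨w', hw'⟩ := h.serial w
    rw [h.desig_imp]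
    exact fun hO => absurd (h.desig_obl w _ |>.1 hO w' hw') (h.not_desig_bot w' α)
  | mp _ _ ihab iha => exact (h.desig_imp w _ _).1 (ihab w) (iha w)
  | nec _ iha => exact (h.desig_obl w _).2 fun w' _ => iha w'
  | _ =>
    simp only [h.desig_imp, h.desig_and, h.desig_or]
    tauto

theorem desig_conj (h : IsModelDmbC R v) (w : W) (γ : Form) (l : List Form) :
    (v w (conj γ l)).desig ↔ ∀ δ ∈ γ :: l, (v w δ).desig := by
  induction l generalizing γ with
  | nil => simp [conj]
  | cons δ l ih => simp [conj, h.desig_and, ih]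

end IsModelDmbC

/-- Soundness of DmbC w.r.t. swap Kripke models. -/
theorem DmbC_soundness (Γ : Set Form) (φ : Form) :
    DerivDmbC Γ φ → SemDmbC Γ φ := by
  rintro (hφ | ⟨γ, l, hΓ, hφ⟩) W R v - hM w hw
  · exact hM.desig_of_thm hφ w
  · exact (hM.desig_imp w _ φ).1 (hM.desig_of_thm hφ w)
      ((hM.desig_conj w γ l).2 fun δ hδ => hw δ (hΓ δ hδ))
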